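/- Let ℓ ≥ 2, let λ, μ be partitions of n with at most ℓ parts, and let π = (π_1, …, π_{ℓ−1}) be a partition with at most ℓ−1 parts and size |π| = t ≤ n. Suppose |λ_i − μ_i| > t for some index i with 1 ≤ i ≤ ℓ. Then g(λ,μ,η) = 0 for every partition η of n with at most ℓ parts such that η/π is a horizontal strip, i.e. such that η_j ≥ π_j for all 1 ≤ j ≤ ℓ−1 and η_{j+1} ≤ π_j for all 1 ≤ j ≤ ℓ−1. -/

import Mathlib

open Finset

/-- A partition with at most `ℓ` parts: a weakly decreasing tuple of naturals. -/
def IsPartition {ℓ : ℕ} (lam : Fin ℓ → ℕ) : Prop :=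
  ∀ i j : Fin ℓ, i ≤ j → lam j ≤ lam i

/-- The index type for the `3ℓ` variables `x_1,…,x_ℓ,y_1,…,y_ℓ,z_1,…,z_ℓ`. -/
abbrev KVar (ℓ : ℕ) := Fin ℓ ⊕ (Fin ℓ ⊕ Fin ℓ)

noncomputable section

/-- The variable `x_i`. -/
def Xv (ℓ : ℕ) (i : Fin ℓ) : MvPowerSeries (KVar ℓ) ℤ := MvPowerSeries.X (Sum.inl i)

/-- The variable `y_j`. -/
def Yv (ℓ : ℕ) (j : Fin ℓ) : MvPowerSeries (KVar ℓ) ℤ := MvPowerSeries.X (Sum.inr (Sum.inl j))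

/-- The variable `z_k`. -/
def Zv (ℓ : ℕ) (k : Fin ℓ) : MvPowerSeries (KVar ℓ) ℤ := MvPowerSeries.X (Sum.inr (Sum.inr k))

/-- The Vandermonde product `∏_{i<j} (v i - v j)`. -/
def vdm (ℓ : ℕ) (v : Fin ℓ → MvPowerSeries (KVar ℓ) ℤ) : MvPowerSeries (KVar ℓ) ℤ :=
  ∏ i : Fin ℓ, ∏ j : Fin ℓ, if i < j then v i - v j else 1

/-- The Cauchy kernel `∏_{i,j,k} (1 - x_i y_j z_k)⁻¹`. -/
def cauchyKernel (ℓ : ℕ) : MvPowerSeries (KVar ℓ) ℤ :=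
  ∏ i : Fin ℓ, ∏ j : Fin ℓ, ∏ k : Fin ℓ,
    MvPowerSeries.invOfUnit (1 - Xv ℓ i * Yv ℓ j * Zv ℓ k) 1

/-- The truncated Cauchy kernel `∏_{i,j,k} (1 + x_iy_jz_k + ⋯ + (x_iy_jz_k)^D)`. -/
def truncKernel (ℓ D : ℕ) : MvPowerSeries (KVar ℓ) ℤ :=
  ∏ i : Fin ℓ, ∏ j : Fin ℓ, ∏ k : Fin ℓ,
    ∑ d ∈ Finset.range (D + 1), (Xv ℓ i * Yv ℓ j * Zv ℓ k) ^ d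

/-- The exponent vector of the monomial `∏ x_i^{a_i} ∏ y_j^{b_j} ∏ z_k^{c_k}`. -/
def expVec3 (ℓ : ℕ) (a b c : Fin ℓ → ℕ) : KVar ℓ →₀ ℕ :=
  Finsupp.equivFunOnFinite.symm (Sum.elim a (Sum.elim b c))

/-- The staircase-shifted exponent vector of
`∏ x_i^{λ_i+ℓ-i} ∏ y_j^{μ_j+ℓ-j} ∏ z_k^{ν_k+ℓ-k}` (here `i,j,k` are 0-based). -/
def kronExp (ℓ : ℕ) (lam mu nu : Fin ℓ → ℕ) : KVar ℓ →₀ ℕ :=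
  expVec3 ℓ (fun i => lam i + (ℓ - 1 - (i : ℕ))) (fun j => mu j + (ℓ - 1 - (j : ℕ)))
    (fun k => nu k + (ℓ - 1 - (k : ℕ)))

/-- The Kronecker coefficient `g(λ,μ,ν)`, defined as the coefficient of the monomial
`∏ x_i^{λ_i+ℓ-i} ∏ y_j^{μ_j+ℓ-j} ∏ z_k^{ν_k+ℓ-k}` in
`Δ(x)Δ(y)Δ(z) ∏_{i,j,k} (1-x_iy_jz_k)⁻¹`. -/
def kron (ℓ : ℕ) (lam mu nu : Fin ℓ → ℕ) : ℤ :=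
  MvPowerSeries.coeff (kronExp ℓ lam mu nu)
    (vdm ℓ (Xv ℓ) * vdm ℓ (Yv ℓ) * vdm ℓ (Zv ℓ) * cauchyKernel ℓ)

end

/-!
Fix a column `k` (indices start at `0`). The Cauchy-type identity
`∑_ω sgn ω ∏_i ∏_{j ≠ ω i} (1 - u_i y_j) = ± Δ(u) Δ(y)`, applied with `u_i = x_i z_k`, turns
`z_k^L Δ(x) Δ(y) ∏_{i,j} (1 - x_i y_j z_k)⁻¹` (with `L = ℓ(ℓ-1)/2`) into a signed sum over
permutations `ω` of `∏_i (1 - x_i y_{ω i} z_k)⁻¹`, whose monomials have equal exponents at `x_i` and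
`y_{ω i}`. The remaining factor `Δ(z) ∏_{k' ≠ k} ∏_{i,j} (1 - x_i y_j z_{k'})⁻¹` has equal total
degrees `T` in `x` and in `y` and degree `< ℓ` in `z_k`. Comparing `z_k`-degrees bounds `T` by
`|λ| - ν_k + k`, so every monomial contributing to `g(λ, μ, ν)` matches the strictly decreasing
sequences `λ_i - i` and `μ_j - j` along `ω` within that bound; a pigeonhole argument then gives the
same bound along the identity: `|λ_i - μ_i| ≤ |λ| - ν_k + k`. For `k = 0` the horizontal strip
condition gives `|λ| - η_0 ≤ |π| = t`.
-/

namespace MvPowerSeries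

variable {σ R : Type*}

section CommSemiring

variable [CommSemiring R]

theorem exists_add_eq_of_coeff_mul_ne_zero {f g : MvPowerSeries σ R} {d : σ →₀ ℕ}
    (h : coeff d (f * g) ≠ 0) : ∃ a b, a + b = d ∧ coeff a f ≠ 0 ∧ coeff b g ≠ 0 := by
  classical
  rw [coeff_mul] at h
  obtain ⟨⟨a, b⟩, hab, hne⟩ := Finset.exists_ne_zero_of_sum_ne_zero h
  exact ⟨a, b, HasAntidiagonal.mem_antidiagonal.mp hab, left_ne_zero_of_mul hne,
    right_ne_zero_of_mul hne⟩

theorem mem_of_coeff_prod_ne_zero {ι : Type*} (S : AddSubmonoid (σ →₀ ℕ))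
    (f : ι → MvPowerSeries σ R) (s : Finset ι)
    (hf : ∀ i ∈ s, ∀ d, coeff d (f i) ≠ 0 → d ∈ S) {d : σ →₀ ℕ}
    (h : coeff d (∏ i ∈ s, f i) ≠ 0) : d ∈ S := by
  classical
  induction s using Finset.induction_on generalizing d with
  | empty =>
    rw [prod_empty, coeff_one] at h
    rw [of_not_not fun hd => h (if_neg hd)]
    exact S.zero_mem
  | insert a s ha ih =>
    rw [prod_insert ha] at h
    obtain ⟨b, c, rfl, hb, hc⟩ := exists_add_eq_of_coeff_mul_ne_zero h
    exact S.add_mem (hf a (mem_insert_self a s) b hb)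
      (ih (fun i hi => hf i (mem_insert_of_mem hi)) hc)

end CommSemiring

theorem mem_closure_of_coeff_invOfUnit_ne_zero [CommRing R] {e : σ →₀ ℕ} (he : e ≠ 0)
    {d : σ →₀ ℕ} (h : coeff d (invOfUnit (1 - monomial e (1 : R)) 1) ≠ 0) :
    d ∈ AddSubmonoid.closure {e} := by
  classical
  set G := invOfUnit (1 - monomial e (1 : R)) 1
  have hG : G = 1 + monomial e 1 * G := by
    have := mul_invOfUnit (1 - monomial e (1 : R)) 1 (by
      rw [map_sub, map_one, ← coeff_zero_eq_constantCoeff_apply, coeff_monomial, if_neg he.symm,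
        sub_zero, Units.val_one])
    linear_combination this
  induction hd : d.degree using Nat.strong_induction_on generalizing d with
  | _ N ih =>
    by_cases hd0 : d = 0
    · exact hd0 ▸ AddSubmonoid.zero_mem _
    rw [hG, map_add, coeff_one, if_neg hd0, zero_add, coeff_monomial_mul, one_mul] at h
    split_ifs at h with hle
    · have hdeg : (d - e).degree < N := by
        have h1 := map_add Finsupp.degree (d - e) e
        rw [tsub_add_cancel_of_le hle] at h1
        have : 0 < e.degree := Nat.pos_of_ne_zero ((Finsupp.degree_eq_zero_iff e).not.mpr he)
        omega
      rw [← tsub_add_cancel_of_le hle]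
      exact AddSubmonoid.add_mem _ (ih _ hdeg h rfl) (AddSubmonoid.subset_closure rfl)
    · exact absurd rfl h

end MvPowerSeries

section Vandermonde

open Matrix Equiv

variable {A : Type*} [CommRing A]

theorem prod_sub_mul_eq_sum_esymm {ι : Type*} (s : Finset ι) (y : ι → A) (a b : A) :
    ∏ j ∈ s, (a - b * y j) =
      ∑ m ∈ range (#s + 1), (-1) ^ m * a ^ (#s - m) * b ^ m * (s.val.map y).esymm m := by
  classical
  have hsplit : ∀ j, a - b * y j = -b * y j + a := fun j => by ring
  simp_rw [hsplit, prod_add, sum_powerset, Finset.esymm_map_val, mul_sum]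
  refine sum_congr rfl fun m _ => sum_congr rfl fun t ht => ?_
  obtain ⟨hts, rfl⟩ := mem_powersetCard.mp ht
  rw [prod_mul_distrib, prod_const, prod_const, card_sdiff_of_subset hts, neg_pow]
  ring

variable {n : ℕ}

theorem prod_Ioi_sub_eq_neg_one_pow_mul_det_vandermonde (v : Fin n → A) :
    ∏ i, ∏ j ∈ Ioi i, (v i - v j) = (-1) ^ (∑ i : Fin n, #(Ioi i)) * (vandermonde v).det := by
  rw [det_vandermonde, ← prod_pow_eq_pow_sum, ← prod_mul_distrib]
  refine prod_congr rfl fun i _ => ?_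
  rw [← prod_neg]
  simp only [neg_sub]

theorem prod_prod_compl_sub_eq_neg_one_pow_mul_det_vandermonde_sq (y : Fin n → A) :
    ∏ j, ∏ k ∈ {j}ᶜ, (y j - y k) =
      (-1) ^ (∑ i : Fin n, #(Ioi i)) * (vandermonde y).det ^ 2 := by
  have hsplit : ∀ j, ∏ k ∈ {j}ᶜ, (y j - y k) =
      (∏ k ∈ Ioi j, (y j - y k)) * ∏ k ∈ Iio j, (y j - y k) := fun j => by
    rw [← Ioi_disjUnion_Iio, prod_disjUnion]
  have hlower : ∏ j, ∏ k ∈ Iio j, (y j - y k) = (vandermonde y).det := by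
    rw [det_vandermonde]
    exact prod_comm' (by simp)
  simp_rw [hsplit, prod_mul_distrib, hlower, prod_Ioi_sub_eq_neg_one_pow_mul_det_vandermonde]
  ring

def esymmComplMatrix (y : Fin n → A) : Matrix (Fin n) (Fin n) A :=
  of fun j m => (-1) ^ (m : ℕ) * ((({j}ᶜ : Finset (Fin n)).val.map y).esymm m)

theorem card_compl_singleton_add_one (j : Fin n) : #({j}ᶜ : Finset (Fin n)) + 1 = n := by
  rw [card_compl, card_singleton, Fintype.card_fin]
  exact Nat.sub_add_cancel j.pos

theorem esymmComplMatrix_mul_rev_vandermonde (y : Fin n → A) :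
    esymmComplMatrix y * (vandermonde y)ᵀ.submatrix Fin.revPerm id =
      diagonal fun j => ∏ k ∈ {j}ᶜ, (y j - y k) := by
  ext j l
  have hcard := card_compl_singleton_add_one j
  have hexp := prod_sub_mul_eq_sum_esymm ({j}ᶜ : Finset (Fin n)) y (y l) 1
  simp only [one_mul, one_pow, mul_one] at hexp
  rw [hcard, ← Fin.sum_univ_eq_sum_range] at hexp
  simp only [mul_apply, diagonal_apply, esymmComplMatrix, of_apply, submatrix_apply,
    transpose_apply, vandermonde_apply, id_eq, Fin.revPerm_apply, Fin.val_rev]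
  have hrow : ∑ m : Fin n, (-1) ^ (m : ℕ) * (({j}ᶜ : Finset (Fin n)).val.map y).esymm m *
      y l ^ (n - (m + 1)) = ∏ k ∈ {j}ᶜ, (y l - y k) := by
    rw [hexp]
    refine sum_congr rfl fun m _ => ?_
    rw [show n - (m + 1) = #({j}ᶜ : Finset (Fin n)) - m by omega]
    ring
  rw [hrow]
  split_ifs with hjl
  · rw [hjl]
  · exact prod_eq_zero (mem_compl.mpr (by simpa [eq_comm] using hjl)) (sub_self _)

theorem exists_det_esymmComplMatrix_eq [IsDomain A] {y : Fin n → A}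
    (hy : Function.Injective y) :
    ∃ ε : ℤˣ, (esymmComplMatrix y).det = ε • (vandermonde y).det := by
  set s : ℤˣ := Perm.sign (Fin.revPerm : Perm (Fin n))
  refine ⟨s * (-1) ^ (∑ i : Fin n, #(Ioi i)),
    mul_right_cancel₀ (det_vandermonde_ne_zero_iff.mpr hy) ?_⟩
  have key := congrArg det (esymmComplMatrix_mul_rev_vandermonde y)
  rw [det_mul, det_permute, det_transpose, det_diagonal,
    prod_prod_compl_sub_eq_neg_one_pow_mul_det_vandermonde_sq] at key
  have hs : ((s : ℤ) : A) * (s : ℤ) = 1 := by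
    rw [← Int.cast_mul, ← Units.val_mul, Int.units_mul_self, Units.val_one, Int.cast_one]
  rw [Units.smul_def, zsmul_eq_mul]
  push_cast
  linear_combination ((s : ℤ) : A) * key - (esymmComplMatrix y).det * (vandermonde y).det * hs

/-- The Cauchy matrix `1 / (1 - u i * y j)` with its `i`-th row multiplied by
`∏ k, (1 - u i * y k)`. -/
def clearedCauchyMatrix (u y : Fin n → A) : Matrix (Fin n) (Fin n) A :=
  of fun i j => ∏ k ∈ {j}ᶜ, (1 - u i * y k)

theorem clearedCauchyMatrix_eq_vandermonde_mul (u y : Fin n → A) :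
    clearedCauchyMatrix u y = vandermonde u * (esymmComplMatrix y)ᵀ := by
  ext i j
  have hexp := prod_sub_mul_eq_sum_esymm ({j}ᶜ : Finset (Fin n)) y 1 (u i)
  rw [card_compl_singleton_add_one, ← Fin.sum_univ_eq_sum_range] at hexp
  simp only [clearedCauchyMatrix, esymmComplMatrix, mul_apply, of_apply, transpose_apply,
    vandermonde_apply, hexp, one_pow, mul_one]
  exact sum_congr rfl fun m _ => by ring

theorem exists_det_clearedCauchyMatrix_eq [IsDomain A] (u : Fin n → A) {y : Fin n → A}
    (hy : Function.Injective y) :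
    ∃ ε : ℤˣ, (clearedCauchyMatrix u y).det = ε • ((vandermonde u).det * (vandermonde y).det) := by
  obtain ⟨ε, hε⟩ := exists_det_esymmComplMatrix_eq hy
  refine ⟨ε, ?_⟩
  rw [clearedCauchyMatrix_eq_vandermonde_mul, det_mul, det_transpose, hε, mul_smul_comm]

end Vandermonde

section Matching

variable {ι α : Type*} [LinearOrder ι] [LocallyFiniteOrderBot ι]
  [AddCommGroup α] [LinearOrder α] [IsOrderedAddMonoid α]

theorem sub_le_of_abs_sub_comp_perm_le {a b : ι → α} (ha : Antitone a) (hb : Antitone b)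
    (ω : Equiv.Perm ι) {t : α} (h : ∀ i, |a i - b (ω i)| ≤ t) (i : ι) : a i - b i ≤ t := by
  by_contra! hgap
  -- every `j ≤ i` is matched strictly below `i`, which is one slot too few
  have hmaps : ∀ j ∈ Iic i, ω j ∈ Iio i := by
    intro j hj
    rw [mem_Iic] at hj
    rw [mem_Iio]
    by_contra! hle
    exact (hgap.trans_le (sub_le_sub (ha hj) (hb hle))).not_ge (le_of_abs_le (h j))
  have hssub : Iio i ⊂ Iic i :=
    (ssubset_iff_of_subset Iio_subset_Iic_self).mpr ⟨i, mem_Iic.mpr le_rfl, by simp⟩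
  exact (card_le_card_of_injOn ω hmaps ω.injective.injOn).not_gt (card_lt_card hssub)

theorem abs_sub_le_of_abs_sub_comp_perm_le {a b : ι → α} (ha : Antitone a) (hb : Antitone b)
    (ω : Equiv.Perm ι) {t : α} (h : ∀ i, |a i - b (ω i)| ≤ t) (i : ι) : |a i - b i| ≤ t := by
  refine abs_sub_le_iff.mpr ⟨sub_le_of_abs_sub_comp_perm_le ha hb ω h i,
    sub_le_of_abs_sub_comp_perm_le hb ha ω.symm (fun j => ?_) i⟩
  simpa [abs_sub_comm] using h (ω.symm j)

end Matching

section KroneckerSeries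

open MvPowerSeries Matrix Equiv

variable {ℓ : ℕ}

noncomputable def tripleExp (i j k : Fin ℓ) : KVar ℓ →₀ ℕ :=
  Finsupp.single (.inl i) 1 + Finsupp.single (.inr (.inl j)) 1 + Finsupp.single (.inr (.inr k)) 1

theorem Xv_mul_Yv_mul_Zv (i j k : Fin ℓ) :
    Xv ℓ i * Yv ℓ j * Zv ℓ k = monomial (tripleExp i j k) 1 := by
  simp only [Xv, Yv, Zv, tripleExp, X, monomial_mul_monomial, mul_one]

theorem tripleExp_ne_zero (i j k : Fin ℓ) : tripleExp i j k ≠ 0 := fun h => by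
  simpa [tripleExp] using DFunLike.congr_fun h (.inl i)

theorem mem_closure_of_coeff_geom_ne_zero {i j k : Fin ℓ} {d : KVar ℓ →₀ ℕ}
    (h : coeff d (invOfUnit (1 - Xv ℓ i * Yv ℓ j * Zv ℓ k) 1) ≠ 0) :
    d ∈ AddSubmonoid.closure {tripleExp i j k} := by
  rw [Xv_mul_Yv_mul_Zv] at h
  exact mem_closure_of_coeff_invOfUnit_ne_zero (tripleExp_ne_zero i j k) h

def matchedExps (ω : Perm (Fin ℓ)) (k : Fin ℓ) : AddSubmonoid (KVar ℓ →₀ ℕ) where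
  carrier := {d | (∀ i, d (.inl i) = d (.inr (.inl (ω i)))) ∧ d (.inr (.inr k)) = ∑ i, d (.inl i)}
  add_mem' := by
    rintro a b ⟨ha, ha'⟩ ⟨hb, hb'⟩
    exact ⟨fun i => by simp [ha i, hb i], by simp [ha', hb', sum_add_distrib]⟩
  zero_mem' := by simp

def balancedExps (k : Fin ℓ) : AddSubmonoid (KVar ℓ →₀ ℕ) where
  carrier := {d | d (.inr (.inr k)) = 0 ∧ ∑ i, d (.inl i) = ∑ j, d (.inr (.inl j))}
  add_mem' := by
    rintro a b ⟨ha, ha'⟩ ⟨hb, hb'⟩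
    exact ⟨by simp [ha, hb], by simp [ha', hb', sum_add_distrib]⟩
  zero_mem' := by simp

theorem tripleExp_mem_matchedExps (ω : Perm (Fin ℓ)) (i k : Fin ℓ) :
    tripleExp i (ω i) k ∈ matchedExps ω k := by
  refine ⟨fun i' => ?_, ?_⟩
  · simp [tripleExp, Finsupp.single_apply, ω.injective.eq_iff]
  · simp [tripleExp, Finsupp.single_apply]

theorem tripleExp_mem_balancedExps {k k' : Fin ℓ} (hk : k' ≠ k) (i j : Fin ℓ) :
    tripleExp i j k' ∈ balancedExps k :=
  ⟨by simp [tripleExp, hk], by simp [tripleExp, Finsupp.single_apply]⟩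

noncomputable def kernelSlice (ℓ : ℕ) (k : Fin ℓ) : MvPowerSeries (KVar ℓ) ℤ :=
  ∏ i : Fin ℓ, ∏ j : Fin ℓ, invOfUnit (1 - Xv ℓ i * Yv ℓ j * Zv ℓ k) 1

theorem cauchyKernel_eq_prod_kernelSlice (ℓ : ℕ) : cauchyKernel ℓ = ∏ k, kernelSlice ℓ k := by
  simp only [cauchyKernel, kernelSlice]
  exact (prod_congr rfl fun _ _ => prod_comm).trans prod_comm

noncomputable def matchedKernel (ℓ : ℕ) (ω : Perm (Fin ℓ)) (k : Fin ℓ) :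
    MvPowerSeries (KVar ℓ) ℤ :=
  ∏ i, invOfUnit (1 - Xv ℓ i * Yv ℓ (ω i) * Zv ℓ k) 1

theorem mem_matchedExps_of_coeff_ne_zero (ω : Perm (Fin ℓ)) (k : Fin ℓ) {d : KVar ℓ →₀ ℕ}
    (h : coeff d (matchedKernel ℓ ω k) ≠ 0) : d ∈ matchedExps ω k :=
  mem_of_coeff_prod_ne_zero _ _ _ (fun i _ _ hd => AddSubmonoid.closure_le.mpr
    (Set.singleton_subset_iff.mpr (tripleExp_mem_matchedExps ω i k))
    (mem_closure_of_coeff_geom_ne_zero hd)) h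

theorem mem_balancedExps_of_coeff_ne_zero (k : Fin ℓ) {d : KVar ℓ →₀ ℕ}
    (h : coeff d (∏ k' ∈ {k}ᶜ, kernelSlice ℓ k') ≠ 0) : d ∈ balancedExps k := by
  refine mem_of_coeff_prod_ne_zero _ _ _ (fun k' hk' _ hd => ?_) h
  refine mem_of_coeff_prod_ne_zero _ _ _ (fun i _ _ hd => ?_) hd
  refine mem_of_coeff_prod_ne_zero _ _ _ (fun j _ d hd => ?_) hd
  exact AddSubmonoid.closure_le.mpr (Set.singleton_subset_iff.mpr
    (tripleExp_mem_balancedExps (mem_compl.mp hk' ∘ mem_singleton.mpr) i j))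
    (mem_closure_of_coeff_geom_ne_zero hd)

theorem vdm_eq_neg_one_pow_mul_det_vandermonde (v : Fin ℓ → MvPowerSeries (KVar ℓ) ℤ) :
    vdm ℓ v = (-1) ^ (∑ i : Fin ℓ, #(Ioi i)) * (vandermonde v).det := by
  rw [← prod_Ioi_sub_eq_neg_one_pow_mul_det_vandermonde, vdm]
  refine prod_congr rfl fun i _ => ?_
  rw [← prod_filter]
  congr 1
  ext j
  simp

theorem coeff_vdm_Zv_ne_zero {d : KVar ℓ →₀ ℕ} (h : coeff d (vdm ℓ (Zv ℓ)) ≠ 0) :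
    (∀ i, d (.inl i) = 0) ∧ (∀ j, d (.inr (.inl j)) = 0) ∧ ∀ k, d (.inr (.inr k)) < ℓ := by
  rw [vdm_eq_neg_one_pow_mul_det_vandermonde] at h
  replace h : coeff d (vandermonde (Zv ℓ)).det ≠ 0 := by
    rcases neg_one_pow_eq_or (MvPowerSeries (KVar ℓ) ℤ) (∑ i : Fin ℓ, #(Ioi i)) with hs | hs <;>
      rw [hs] at h <;> simpa using h
  rw [det_apply, map_sum] at h
  obtain ⟨τ, -, hτ⟩ := exists_ne_zero_of_sum_ne_zero h
  have hmon : ∏ i, vandermonde (Zv ℓ) (τ i) i =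
      monomial (∑ i : Fin ℓ, Finsupp.single (.inr (.inr (τ i))) (i : ℕ)) (1 : ℤ) := by
    simp only [vandermonde_apply, Zv, X_pow_eq, prod_monomial, prod_const_one]
  rw [Units.smul_def, map_zsmul, hmon, coeff_monomial] at hτ
  obtain rfl : d = ∑ i : Fin ℓ, Finsupp.single (.inr (.inr (τ i))) (i : ℕ) := by
    by_contra hne
    exact hτ (by rw [if_neg hne, smul_zero])
  refine ⟨fun i => by simp [Finsupp.finsetSum_apply], fun j => by simp [Finsupp.finsetSum_apply],
    fun k => ?_⟩
  simp only [Finsupp.finsetSum_apply, Finsupp.single_apply, Sum.inr.injEq,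
    ← τ.eq_symm_apply, sum_ite_eq', mem_univ, if_true]
  exact (τ.symm k).isLt

theorem abs_sub_add_lt_of_coeff_matchedKernel_mul_ne_zero (ω : Perm (Fin ℓ)) (k : Fin ℓ)
    {d : KVar ℓ →₀ ℕ}
    (h : coeff d (matchedKernel ℓ ω k * (vdm ℓ (Zv ℓ) * ∏ k' ∈ {k}ᶜ, kernelSlice ℓ k')) ≠ 0)
    (i : Fin ℓ) :
    |(d (.inl i) : ℤ) - d (.inr (.inl (ω i)))| + d (.inr (.inr k)) < ∑ j, (d (.inl j) : ℤ) + ℓ := by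
  obtain ⟨p, q, rfl, hp, hq⟩ := exists_add_eq_of_coeff_mul_ne_zero h
  obtain ⟨r, w, rfl, hr, hw⟩ := exists_add_eq_of_coeff_mul_ne_zero hq
  obtain ⟨hpxy, hpz⟩ := mem_matchedExps_of_coeff_ne_zero ω k hp
  obtain ⟨hrx, hry, hrz⟩ := coeff_vdm_Zv_ne_zero hr
  obtain ⟨hwz, hwxy⟩ := mem_balancedExps_of_coeff_ne_zero k hw
  have hwx : w (.inl i) ≤ ∑ j, w (.inl j) :=
    single_le_sum (f := fun j => w (.inl j)) (fun _ _ => Nat.zero_le _) (mem_univ i)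
  have hwy : w (.inr (.inl (ω i))) ≤ ∑ j, w (.inl j) :=
    hwxy ▸ single_le_sum (f := fun j => w (.inr (.inl j))) (fun _ _ => Nat.zero_le _) (mem_univ _)
  have hdiff : |(w (.inl i) : ℤ) - w (.inr (.inl (ω i)))| ≤ ∑ j, (w (.inl j) : ℤ) := by
    rw [abs_sub_le_iff]; push_cast [← Nat.cast_sum]; omega
  have hrzk := hrz k
  simp only [Finsupp.add_apply, hrx, hry, hwz, hpxy i, hpz, add_zero, zero_add]
  push_cast [sum_add_distrib]
  rw [add_sub_add_left_eq_sub]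
  omega

theorem constantCoeff_one_sub_Xv_mul_Yv_mul_Zv (i j k : Fin ℓ) :
    constantCoeff (1 - Xv ℓ i * Yv ℓ j * Zv ℓ k) = ((1 : ℤˣ) : ℤ) := by
  rw [Xv_mul_Yv_mul_Zv, map_sub, map_one, ← coeff_zero_eq_constantCoeff_apply, coeff_monomial,
    if_neg (tripleExp_ne_zero i j k).symm, sub_zero, Units.val_one]

noncomputable def kronSeries (ℓ : ℕ) : MvPowerSeries (KVar ℓ) ℤ :=
  vdm ℓ (Xv ℓ) * vdm ℓ (Yv ℓ) * vdm ℓ (Zv ℓ) * cauchyKernel ℓ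

theorem exists_Zv_pow_mul_kronSeries_eq_sum (k : Fin ℓ) : ∃ c : Perm (Fin ℓ) → ℤ,
    Zv ℓ k ^ (∑ i : Fin ℓ, (i : ℕ)) * kronSeries ℓ =
      ∑ ω, c ω • (matchedKernel ℓ ω k * (vdm ℓ (Zv ℓ) * ∏ k' ∈ {k}ᶜ, kernelSlice ℓ k')) := by
  classical
  have : IsDomain (MvPowerSeries (KVar ℓ) ℤ) := NoZeroDivisors.to_isDomain _
  have hy : Function.Injective (Yv ℓ) := fun a b h => by simpa [Yv, X_inj] using h
  obtain ⟨ε, hε⟩ := exists_det_clearedCauchyMatrix_eq (fun i => Xv ℓ i * Zv ℓ k) hy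
  have hscale : (vandermonde fun i => Xv ℓ i * Zv ℓ k).det =
      Zv ℓ k ^ (∑ i : Fin ℓ, (i : ℕ)) * (vandermonde (Xv ℓ)).det := by
    rw [← prod_pow_eq_pow_sum, ← det_mul_row]
    congr
    ext i m
    simp [vandermonde_apply, mul_pow, mul_comm]
  have hdet : (clearedCauchyMatrix (fun i => Xv ℓ i * Zv ℓ k) (Yv ℓ)).det =
      ∑ ω : Perm (Fin ℓ), Perm.sign ω • ∏ i, ∏ j ∈ {ω i}ᶜ, (1 - Xv ℓ i * Yv ℓ j * Zv ℓ k) := by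
    rw [← det_transpose, det_apply]
    simp [clearedCauchyMatrix, mul_right_comm]
  have hslice : ∀ ω : Perm (Fin ℓ),
      (∏ i, ∏ j ∈ {ω i}ᶜ, (1 - Xv ℓ i * Yv ℓ j * Zv ℓ k)) * kernelSlice ℓ k =
        matchedKernel ℓ ω k := by
    intro ω
    rw [kernelSlice, matchedKernel, ← prod_mul_distrib]
    refine prod_congr rfl fun i _ => ?_
    rw [Fintype.prod_eq_mul_prod_compl (ω i), mul_left_comm, ← prod_mul_distrib,
      prod_eq_one fun j _ => mul_invOfUnit _ _ (constantCoeff_one_sub_Xv_mul_Yv_mul_Zv i j k),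
      mul_one]
  refine ⟨fun ω => ((ε⁻¹ * Perm.sign ω : ℤˣ) : ℤ), ?_⟩
  have hsign : ∀ a b : MvPowerSeries (KVar ℓ) ℤ,
      (-1) ^ (∑ i : Fin ℓ, #(Ioi i)) * a * ((-1) ^ (∑ i : Fin ℓ, #(Ioi i)) * b) = a * b := by
    intro a b
    rw [mul_mul_mul_comm, ← mul_pow, neg_one_mul, neg_neg, one_pow, one_mul]
  rw [kronSeries, cauchyKernel_eq_prod_kernelSlice, Fintype.prod_eq_mul_prod_compl k,
    vdm_eq_neg_one_pow_mul_det_vandermonde (Xv ℓ), vdm_eq_neg_one_pow_mul_det_vandermonde (Yv ℓ),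
    hsign]
  calc _ = ((vandermonde fun i => Xv ℓ i * Zv ℓ k).det * (vandermonde (Yv ℓ)).det) *
        kernelSlice ℓ k * (vdm ℓ (Zv ℓ) * ∏ k' ∈ {k}ᶜ, kernelSlice ℓ k') := by
        rw [hscale]; ring
    _ = (ε⁻¹ • (clearedCauchyMatrix (fun i => Xv ℓ i * Zv ℓ k) (Yv ℓ)).det) * kernelSlice ℓ k *
        (vdm ℓ (Zv ℓ) * ∏ k' ∈ {k}ᶜ, kernelSlice ℓ k') := by rw [hε, inv_smul_smul]
    _ = _ := by
      rw [hdet, smul_sum, sum_mul, sum_mul]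
      refine sum_congr rfl fun ω _ => ?_
      simp only [Units.smul_def, smul_mul_assoc, ← mul_assoc, hslice, smul_smul, Units.val_mul]

theorem sum_sub_one_sub_val_eq_sum_val (ℓ : ℕ) :
    ∑ i : Fin ℓ, (ℓ - 1 - (i : ℕ)) = ∑ i : Fin ℓ, (i : ℕ) := by
  rw [← Equiv.sum_comp Fin.revPerm]
  exact sum_congr rfl fun i _ => by simp only [Fin.revPerm_apply, Fin.val_rev]; omega

theorem kronExp_inl (lam mu nu : Fin ℓ → ℕ) (i : Fin ℓ) :
    kronExp ℓ lam mu nu (.inl i) = lam i + (ℓ - 1 - i) := rfl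

theorem kronExp_inr_inl (lam mu nu : Fin ℓ → ℕ) (j : Fin ℓ) :
    kronExp ℓ lam mu nu (.inr (.inl j)) = mu j + (ℓ - 1 - j) := rfl

theorem kronExp_inr_inr (lam mu nu : Fin ℓ → ℕ) (k : Fin ℓ) :
    kronExp ℓ lam mu nu (.inr (.inr k)) = nu k + (ℓ - 1 - k) := rfl

theorem IsPartition.antitone_sub_val {lam : Fin ℓ → ℕ} (hlam : IsPartition lam) :
    Antitone fun j : Fin ℓ => (lam j : ℤ) - j := fun a b hab => by
  have := hlam a b hab
  have : (a : ℕ) ≤ b := hab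
  dsimp only
  omega

theorem abs_sub_le_of_kron_ne_zero {lam mu nu : Fin ℓ → ℕ} (hlam : IsPartition lam)
    (hmu : IsPartition mu) (h : kron ℓ lam mu nu ≠ 0) (i k : Fin ℓ) :
    |(lam i : ℤ) - mu i| ≤ ∑ j, (lam j : ℤ) - nu k + k := by
  obtain ⟨c, hc⟩ := exists_Zv_pow_mul_kronSeries_eq_sum k
  set L := ∑ i : Fin ℓ, (i : ℕ)
  have hshift : coeff (kronExp ℓ lam mu nu + Finsupp.single (.inr (.inr k)) L)
      (Zv ℓ k ^ L * kronSeries ℓ) = kron ℓ lam mu nu := by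
    rw [Zv, X_pow_eq, add_comm, coeff_add_monomial_mul, one_mul, kron, kronSeries]
  rw [← hshift, hc, map_sum] at h
  obtain ⟨ω, -, hω⟩ := exists_ne_zero_of_sum_ne_zero h
  rw [map_zsmul] at hω
  have hbound :=
    abs_sub_add_lt_of_coeff_matchedKernel_mul_ne_zero ω k (right_ne_zero_of_smul hω)
  have hL := sum_sub_one_sub_val_eq_sum_val ℓ
  have hmatch : ∀ j, |((lam j : ℤ) - j) - ((mu (ω j) : ℤ) - (ω j : ℕ))| ≤
      ∑ j, (lam j : ℤ) - nu k + k := by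
    intro j
    have hj := hbound j
    simp only [Finsupp.coe_add, Pi.add_apply, kronExp_inl, kronExp_inr_inl, kronExp_inr_inr,
      ne_eq, Sum.inr.injEq, reduceCtorEq, not_false_eq_true, Finsupp.single_eq_of_ne,
      Finsupp.single_eq_same, add_zero, Nat.cast_add, sum_add_distrib] at hj
    have hsum : ∑ x : Fin ℓ, ((ℓ - 1 - (x : ℕ) : ℕ) : ℤ) = L := by rw [← Nat.cast_sum, hL]
    have hdiff : (lam j : ℤ) + ((ℓ - 1 - j : ℕ) : ℤ) - (mu (ω j) + ((ℓ - 1 - ω j : ℕ) : ℤ)) =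
        ((lam j : ℤ) - j) - ((mu (ω j) : ℤ) - (ω j : ℕ)) := by
      have := j.isLt; have := (ω j).isLt; omega
    rw [hsum, hdiff] at hj
    have := k.isLt
    omega
  simpa using abs_sub_le_of_abs_sub_comp_perm_le hlam.antitone_sub_val hmu.antitone_sub_val ω
    hmatch i

end KroneckerSeries

/-- if `|λ_i - μ_i| > t = |π|` for some `i`, then `g(λ,μ,η) = 0`
for every partition `η` of `n` such that `η/π` is a horizontal strip. -/
theorem stmt1 (ℓ n t : ℕ)
    (lam mu : Fin ℓ → ℕ) (hlam : IsPartition lam) (hmu : IsPartition mu)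
    (hlsum : ∑ i, lam i = n)
    (π : Fin (ℓ - 1) → ℕ) (hπsum : ∑ j, π j = t)
    (i : Fin ℓ) (hi : (t : ℤ) < |(lam i : ℤ) - (mu i : ℤ)|)
    (η : Fin ℓ → ℕ) (hηsum : ∑ j, η j = n)
    (hstrip₂ : ∀ j : Fin (ℓ - 1), η ⟨(j : ℕ) + 1, by have := j.isLt; omega⟩ ≤ π j) :
    kron ℓ lam mu η = 0 := by
  obtain ⟨m, rfl⟩ : ∃ m, ℓ = m + 1 := ⟨ℓ - 1, by have := i.isLt; omega⟩
  have hfirst : n ≤ η 0 + t := by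
    rw [← hηsum, Fin.sum_univ_succ, ← hπsum]
    exact Nat.add_le_add_left (sum_le_sum fun j _ => hstrip₂ j) _
  have hlsum' : ∑ j, (lam j : ℤ) = n := by rw [← hlsum, Nat.cast_sum]
  by_contra h
  have := abs_sub_le_of_kron_ne_zero hlam hmu h i 0
  rw [hlsum', Fin.val_zero, Nat.cast_zero, add_zero] at this
  omega
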